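/- The graph H_4 is 4-χρ-vertex-critical; that is, χρ(H_4) = 4 and χρ(H_4 − v) < 4 for every vertex v of H_4. -/

import Mathlib

/-!
The triangle `c d g` needs all three colours of a `3`-packing colouring. The vertices `b` and `e`
are within distance `2` of the whole triangle and adjacent to `c`, resp. `d`, so they can only
take colour `1`, which forces colour `1` onto `g`. The leaf `a` is adjacent to `b` and at distances
`2, 3` from `c, d`; it has a colour only if `c` gets `3`. Symmetrically `f` forces colour `3` onto
`d`, a contradiction. All remaining facts (a `4`-packing colouring of `H₄`, `3`-packing colourings of
each `H₄ - v`, and the distances in `H₄`) are finite checks, made decidable through the recursion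
`edist u v ≤ n + 1 ↔ u = v ∨ ∃ w, Adj u w ∧ edist w v ≤ n`.
-/

open SimpleGraph

/-- A `k`-packing coloring of `G`: colors in `{1,…,k}` and distinct vertices of equal color `i`
are at (extended, shortest-path) distance greater than `i`. -/
def IsPackingColoring {V : Type*} (G : SimpleGraph V) (k : ℕ) (c : V → ℕ) : Prop :=
  (∀ v, 1 ≤ c v ∧ c v ≤ k) ∧
    ∀ u v : V, u ≠ v → c u = c v → (c u : ℕ∞) < G.edist u v

/-- The packing chromatic number of `G`: the least `k` admitting a `k`-packing coloring. -/
noncomputable def packingChromaticNumber {V : Type*} (G : SimpleGraph V) : ℕ :=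
  sInf {k | ∃ c : V → ℕ, IsPackingColoring G k c}

/-- `G` is `4`-`χρ`-vertex-critical: `χρ(G) = 4` and deleting any vertex drops `χρ` below `4`. -/
def FourVertexCritical {V : Type*} (G : SimpleGraph V) : Prop :=
  packingChromaticNumber G = 4 ∧
    ∀ v : V, packingChromaticNumber (G.induce ({v}ᶜ : Set V)) < 4

/-- `G` contains a (not necessarily induced) subgraph isomorphic to `H`. -/
def HasCopy {W V : Type*} (H : SimpleGraph W) (G : SimpleGraph V) : Prop :=
  ∃ f : H →g G, Function.Injective f

/-- The cycle on `n` vertices (for `n ≥ 3`). -/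
def CycGraph (n : ℕ) : SimpleGraph (Fin n) :=
  SimpleGraph.fromRel (fun i j => (i.val + 1) % n = j.val)

/-- `H₄`: path `a(0)-b(1)-c(2)-d(3)-e(4)-f(5)` plus a vertex `g(6)` adjacent to `c=2` and
`d=3`. -/
def H4graph : SimpleGraph (Fin 7) :=
  SimpleGraph.fromRel (fun i j =>
    (j.val = i.val + 1 ∧ i.val ≤ 4) ∨ (i.val = 2 ∧ j.val = 6) ∨ (i.val = 3 ∧ j.val = 6))

namespace SimpleGraph

variable {V : Type*} {G : SimpleGraph V} {u v : V}

lemma edist_le_zero_iff : G.edist u v ≤ ((0 : ℕ) : ℕ∞) ↔ u = v := by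
  rw [Nat.cast_zero, nonpos_iff_eq_zero, edist_eq_zero_iff]

lemma edist_le_succ_iff {n : ℕ} :
    G.edist u v ≤ ((n + 1 : ℕ) : ℕ∞) ↔ u = v ∨ ∃ w, G.Adj u w ∧ G.edist w v ≤ n := by
  constructor
  · intro h
    obtain ⟨p, hp⟩ := exists_walk_of_edist_ne_top (ne_top_of_le_ne_top (ENat.natCast_ne_top _) h)
    cases p with
    | nil => exact Or.inl rfl
    | cons hadj q =>
      refine Or.inr ⟨_, hadj, (edist_le q).trans ?_⟩
      rw [← hp, Walk.length_cons] at h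
      exact_mod_cast Nat.succ_le_succ_iff.mp (by exact_mod_cast h)
  · rintro (rfl | ⟨w, hadj, hw⟩)
    · simp
    · calc G.edist u v ≤ G.edist u w + G.edist w v := G.edist_triangle
        _ ≤ 1 + n := add_le_add (edist_eq_one_iff_adj.mpr hadj).le hw
        _ = ((n + 1 : ℕ) : ℕ∞) := by push_cast; ring

instance decidableEdistLE [Fintype V] [DecidableEq V] [DecidableRel G.Adj] :
    ∀ (n : ℕ) (u v : V), Decidable (G.edist u v ≤ n)
  | 0, _, _ => decidable_of_iff _ edist_le_zero_iff.symm
  | n + 1, _, v =>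
    haveI := fun w => decidableEdistLE n w v
    decidable_of_iff _ edist_le_succ_iff.symm

end SimpleGraph

section PackingColoring

variable {V : Type*} {G : SimpleGraph V} {k : ℕ} {c : V → ℕ}

instance [Fintype V] [DecidableEq V] [DecidableRel G.Adj] :
    Decidable (IsPackingColoring G k c) :=
  decidable_of_iff ((∀ v, 1 ≤ c v ∧ c v ≤ k) ∧
      ∀ u v, u ≠ v → c u = c v → ¬ G.edist u v ≤ (c u : ℕ))
    (by simp only [IsPackingColoring, not_le])

lemma IsPackingColoring.mono {k' : ℕ} (hc : IsPackingColoring G k c) (hk : k ≤ k') :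
    IsPackingColoring G k' c :=
  ⟨fun v => ⟨(hc.1 v).1, (hc.1 v).2.trans hk⟩, hc.2⟩

lemma IsPackingColoring.lt_of_edist_le {u v : V} {n : ℕ} (hc : IsPackingColoring G k c)
    (huv : u ≠ v) (hd : G.edist u v ≤ n) (heq : c u = c v) : c u < n := by
  exact_mod_cast (hc.2 u v huv heq).trans_le hd

lemma packingChromaticNumber_le (hc : IsPackingColoring G k c) : packingChromaticNumber G ≤ k :=
  Nat.sInf_le ⟨c, hc⟩

lemma packingChromaticNumber_eq_succ (hc : IsPackingColoring G (k + 1) c)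
    (hk : ∀ c, ¬ IsPackingColoring G k c) : packingChromaticNumber G = k + 1 := by
  refine (packingChromaticNumber_le hc).antisymm (Nat.succ_le_of_lt (not_le.mp fun hle => ?_))
  obtain ⟨c', hc'⟩ := Nat.sInf_mem (⟨k + 1, c, hc⟩ : {k | ∃ c, IsPackingColoring G k c}.Nonempty)
  exact hk c' (hc'.mono hle)

end PackingColoring

instance : DecidableRel H4graph.Adj :=
  fun a b => decidable_of_iff _ (fromRel_adj _ a b).symm

lemma H4graph_isPackingColoring_four : IsPackingColoring H4graph 4 ![1, 2, 1, 3, 1, 2, 4] := by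
  decide

lemma H4graph_not_isPackingColoring_three (c : Fin 7 → ℕ) : ¬ IsPackingColoring H4graph 3 c := by
  intro hpack
  have sep {u v : Fin 7} (n : ℕ) (huv : u ≠ v) (hd : H4graph.edist u v ≤ n) :
      c u = c v → c u < n :=
    hpack.lt_of_edist_le huv hd
  have ha := hpack.1 0
  have hb := hpack.1 1
  have hc := hpack.1 2
  have hd := hpack.1 3
  have he := hpack.1 4
  have hf := hpack.1 5
  have hg := hpack.1 6
  have hcd := sep (u := 2) (v := 3) 1 (by decide) (by decide)
  have hcg := sep (u := 2) (v := 6) 1 (by decide) (by decide)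
  have hdg := sep (u := 3) (v := 6) 1 (by decide) (by decide)
  have hbc := sep (u := 1) (v := 2) 1 (by decide) (by decide)
  have hbd := sep (u := 1) (v := 3) 2 (by decide) (by decide)
  have hbg := sep (u := 1) (v := 6) 2 (by decide) (by decide)
  have hed := sep (u := 4) (v := 3) 1 (by decide) (by decide)
  have hec := sep (u := 4) (v := 2) 2 (by decide) (by decide)
  have heg := sep (u := 4) (v := 6) 2 (by decide) (by decide)
  have hg_one : c 6 = 1 := by omega
  have hab := sep (u := 0) (v := 1) 1 (by decide) (by decide)
  have hac := sep (u := 0) (v := 2) 2 (by decide) (by decide)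
  have had := sep (u := 0) (v := 3) 3 (by decide) (by decide)
  have hc_three : c 2 = 3 := by omega
  have hfe := sep (u := 5) (v := 4) 1 (by decide) (by decide)
  have hfd := sep (u := 5) (v := 3) 2 (by decide) (by decide)
  have hfc := sep (u := 5) (v := 2) 3 (by decide) (by decide)
  have hd_three : c 3 = 3 := by omega
  omega

lemma H4graph_exists_isPackingColoring_induce_compl_three (v : Fin 7) :
    ∃ c, IsPackingColoring (H4graph.induce ({v}ᶜ : Set (Fin 7))) 3 c := by
  fin_cases v
  exacts [⟨fun x => ![1, 1, 2, 3, 1, 2, 1] x, by decide⟩,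
    ⟨fun x => ![1, 1, 1, 3, 1, 2, 2] x, by decide⟩,
    ⟨fun x => ![1, 2, 1, 1, 2, 1, 3] x, by decide⟩,
    ⟨fun x => ![1, 2, 1, 1, 1, 2, 3] x, by decide⟩,
    ⟨fun x => ![2, 1, 3, 1, 1, 1, 2] x, by decide⟩,
    ⟨fun x => ![2, 1, 3, 2, 1, 1, 1] x, by decide⟩,
    ⟨fun x => ![1, 2, 1, 3, 1, 2, 1] x, by decide⟩]

theorem H4_fourVertexCritical : FourVertexCritical H4graph := by
  refine ⟨packingChromaticNumber_eq_succ H4graph_isPackingColoring_four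
    H4graph_not_isPackingColoring_three, fun v => ?_⟩
  obtain ⟨c, hc⟩ := H4graph_exists_isPackingColoring_induce_compl_three v
  exact Nat.lt_succ_of_le (packingChromaticNumber_le hc)
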